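/- Discrete energy conservation law of the EC(λ) schemes in characteristic form: fix Δx > 0, Δt > 0 and λ ∈ ℝ. For a grid function u : ℤ × ℤ → ℝ define φ(i,j) = (1/3)·[(u(i,j)² + u(i,j+1)²)/2]·[(u(i,j) + u(i,j+1))/2] + (1/2)·Σ_{j'∈{j,j+1}} (u(i+1,j') − 2u(i,j') + u(i−1,j'))/Δx² + λ·Δx²·[ (u(i+1,j+1) − u(i−1,j+1)) − (u(i+1,j) − u(i−1,j)) ] / (2·Δx·Δt), and define Ã(i,j) = (φ(i+1,j) − φ(i−1,j))/(2Δx) + (u(i,j+1) − u(i,j))/Δt. Define G̃₃(i,j) = u(i,j)⁴/12 + (1/2)·u(i,j)·(u(i+1,j) − 2u(i,j) + u(i−1,j))/Δx², and F̃₃(i,j) = (1/2)·[ φ(i−1,j)·φ(i,j) + (D_m μ_n u)(i−1,j)·(D_n μ_m u)(i−1,j) − (μ_m μ_n u)(i−1,j)·(D_m D_n u)(i−1,j) + λ·Δx²·(D_n u)(i,j)·(D_n u)(i−1,j) ]. Then for every grid function u and every (i,j) ∈ ℤ × ℤ the algebraic identity φ(i,j)·Ã(i,j) = (F̃₃(i+1,j)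 − F̃₃(i,j))/Δx + (G̃₃(i,j+1) − G̃₃(i,j))/Δt holds; i.e. the grid expression φ·Ã is the discrete divergence D_m(F̃₃) + D_n(G̃₃), so the EC(λ) scheme Ã = 0 possesses a discrete energy conservation law with characteristic Q̃₃ = φ. -/
import Mathlib


noncomputable section

/-- Forward difference in the first (space) index. -/
def Dm (dx : ℝ) (v : ℤ × ℤ → ℝ) : ℤ × ℤ → ℝ := fun p => (v (p.1 + 1, p.2) - v p) / dx

/-- Forward difference in the second (time) index. -/
def Dn (dt : ℝ) (v : ℤ × ℤ → ℝ) : ℤ × ℤ → ℝ := fun p => (v (p.1, p.2 + 1) - v p) / dt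

/-- Forward average in the first (space) index. -/
def mum (v : ℤ × ℤ → ℝ) : ℤ × ℤ → ℝ := fun p => (v (p.1 + 1, p.2) + v p) / 2

/-- Forward average in the second (time) index. -/
def mun (v : ℤ × ℤ → ℝ) : ℤ × ℤ → ℝ := fun p => (v (p.1, p.2 + 1) + v p) / 2

/-- The discrete characteristic `φ = Q̃₃` of the EC(λ) schemes. -/
def phiD (dx dt lam : ℝ) (u : ℤ × ℤ → ℝ) (i j : ℤ) : ℝ :=
  (1 / 3) * ((u (i, j) ^ 2 + u (i, j + 1) ^ 2) / 2) * ((u (i, j) + u (i, j + 1)) / 2)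
  + (1 / 2) * ((u (i + 1, j) - 2 * u (i, j) + u (i - 1, j)) / dx ^ 2
             + (u (i + 1, j + 1) - 2 * u (i, j + 1) + u (i - 1, j + 1)) / dx ^ 2)
  + lam * dx ^ 2 * ((u (i + 1, j + 1) - u (i - 1, j + 1)) - (u (i + 1, j) - u (i - 1, j)))
      / (2 * dx * dt)

/-- The EC(λ) finite difference scheme `Ã` for the mKdV equation. -/
def schemeA (dx dt lam : ℝ) (u : ℤ × ℤ → ℝ) (i j : ℤ) : ℝ :=
  (phiD dx dt lam u (i + 1) j - phiD dx dt lam u (i - 1) j) / (2 * dx)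
  + (u (i, j + 1) - u (i, j)) / dt

/-- The discrete energy density `G̃₃`. -/
def G3D (dx : ℝ) (u : ℤ × ℤ → ℝ) (i j : ℤ) : ℝ :=
  u (i, j) ^ 4 / 12
  + (1 / 2) * u (i, j) * ((u (i + 1, j) - 2 * u (i, j) + u (i - 1, j)) / dx ^ 2)

/-- The discrete energy flux `F̃₃`. -/
def F3D (dx dt lam : ℝ) (u : ℤ × ℤ → ℝ) (i j : ℤ) : ℝ :=
  (1 / 2) * (phiD dx dt lam u (i - 1) j * phiD dx dt lam u i j
    + Dm dx (mun u) (i - 1, j) * Dn dt (mum u) (i - 1, j)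
    - mum (mun u) (i - 1, j) * Dm dx (Dn dt u) (i - 1, j)
    + lam * dx ^ 2 * Dn dt u (i, j) * Dn dt u (i - 1, j))

/-- Discrete energy conservation law of the EC(λ) schemes in characteristic form:
for every grid function `u` and every grid point `(i,j)`,
`φ·Ã = D_m(F̃₃) + D_n(G̃₃)` holds as an algebraic identity, so the EC(λ) scheme
possesses a discrete energy conservation law with characteristic `Q̃₃ = φ`. -/
theorem EC_energy_conservation_characteristic_form
    (dx dt lam : ℝ) (hdx : 0 < dx) (hdt : 0 < dt) :
    ∀ u : ℤ × ℤ → ℝ, ∀ i j : ℤ,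
      phiD dx dt lam u i j * schemeA dx dt lam u i j
        = (F3D dx dt lam u (i + 1) j - F3D dx dt lam u i j) / dx
          + (G3D dx u i (j + 1) - G3D dx u i j) / dt := by
  intro u i j
  have e1 : i + 1 - 1 = i := by ring
  have e2 : i - 1 + 1 = i := by ring
  have e3 : i + 1 + 1 = i + 2 := by ring
  have e4 : i - 1 - 1 = i - 2 := by ring
  simp only [phiD, schemeA, F3D, G3D, Dm, Dn, mum, mun, e1, e2, e3, e4]
  field_simp
  ring
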